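/- If all support values of all n discrete item-value distributions are integers, then there exists an optimal price vector (maximizing the expected revenue under the maximum price tie-breaking rule) all of whose coordinates are integers. -/
import Mathlib


open Finset

/-- The maximum utility of the buyer at valuation `v` and prices `p`. -/
noncomputable def maxUtil {n : ℕ} (hn : 0 < n) (v p : Fin n → ℝ) : ℝ :=
  (univ : Finset (Fin n)).sup' ⟨⟨0, hn⟩, mem_univ _⟩ (fun i => v i - p i)

/-- The seller's revenue at valuation `v` and prices `p` under the maximum price
tie-breaking rule. -/
noncomputable def Rev {n : ℕ} (hn : 0 < n) (v p : Fin n → ℝ) : ℝ :=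
  if 0 ≤ maxUtil hn v p then
    sSup {x : ℝ | ∃ i, v i - p i = maxUtil hn v p ∧ p i = x}
  else 0

/-- The expected revenue of price vector `p`. -/
noncomputable def ExpRev {n : ℕ} (hn : 0 < n) (supp : Fin n → Finset ℝ)
    (μ : Fin n → ℝ → ℝ) (p : Fin n → ℝ) : ℝ :=
  ∑ v ∈ Fintype.piFinset supp, (∏ i, μ i (v i)) * Rev hn v p

lemma maxUtil_exists {n : ℕ} (hn : 0 < n) (v p : Fin n → ℝ) :
    ∃ j, v j - p j = maxUtil hn v p := by
  obtain ⟨j, -, hj⟩ := Finset.exists_mem_eq_sup'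
    (⟨⟨0, hn⟩, mem_univ _⟩ : (univ : Finset (Fin n)).Nonempty) (fun i => v i - p i)
  exact ⟨j, hj.symm⟩

lemma le_maxUtil {n : ℕ} (hn : 0 < n) (v p : Fin n → ℝ) (i : Fin n) :
    v i - p i ≤ maxUtil hn v p := by
  unfold maxUtil
  exact Finset.le_sup' (fun i => v i - p i) (mem_univ i)

lemma revSet_eq {n : ℕ} (hn : 0 < n) (v p : Fin n → ℝ) :
    {x : ℝ | ∃ i, v i - p i = maxUtil hn v p ∧ p i = x}
      = ↑(((univ : Finset (Fin n)).filter
          (fun i => v i - p i = maxUtil hn v p)).image p) := by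
  ext x
  simp only [Set.mem_setOf_eq, coe_image, Set.mem_image, mem_coe, mem_filter, mem_univ,
    true_and]

lemma revSet_nonempty {n : ℕ} (hn : 0 < n) (v p : Fin n → ℝ) :
    (((univ : Finset (Fin n)).filter
        (fun i => v i - p i = maxUtil hn v p)).image p).Nonempty := by
  obtain ⟨j, hj⟩ := maxUtil_exists hn v p
  exact ⟨p j, mem_image_of_mem _ (mem_filter.2 ⟨mem_univ _, hj⟩)⟩

lemma rev_eq_max' {n : ℕ} (hn : 0 < n) (v p : Fin n → ℝ) (h : 0 ≤ maxUtil hn v p) :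
    Rev hn v p = (((univ : Finset (Fin n)).filter
        (fun i => v i - p i = maxUtil hn v p)).image p).max' (revSet_nonempty hn v p) := by
  rw [Rev, if_pos h, revSet_eq hn v p, Finset.Nonempty.csSup_eq_max']

lemma rev_nonneg {n : ℕ} (hn : 0 < n) (v p : Fin n → ℝ) (hp : ∀ i, 0 ≤ p i) :
    0 ≤ Rev hn v p := by
  by_cases h : 0 ≤ maxUtil hn v p
  · rw [rev_eq_max' hn v p h]
    obtain ⟨j, hj⟩ := maxUtil_exists hn v p
    have hmem : p j ∈ ((univ : Finset (Fin n)).filter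
        (fun i => v i - p i = maxUtil hn v p)).image p :=
      mem_image_of_mem p (mem_filter.2 ⟨mem_univ j, hj⟩)
    exact le_trans (hp j) (Finset.le_max' _ _ hmem)
  · rw [Rev, if_neg h]

lemma rev_mono {n : ℕ} (hn : 0 < n) (v p q : Fin n → ℝ) (hq0 : ∀ i, 0 ≤ q i)
    (H : 0 ≤ maxUtil hn v p → ∀ j, v j - p j = maxUtil hn v p →
      v j - q j = maxUtil hn v q ∧ 0 ≤ v j - q j ∧ p j ≤ q j) :
    Rev hn v p ≤ Rev hn v q := by
  by_cases h : 0 ≤ maxUtil hn v p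
  · obtain ⟨j0, hj0⟩ := maxUtil_exists hn v p
    obtain ⟨hj0q, hj0nn, -⟩ := H h j0 hj0
    have hq : 0 ≤ maxUtil hn v q := hj0q ▸ hj0nn
    rw [rev_eq_max' hn v p h]
    apply Finset.max'_le
    intro x hx
    simp only [mem_image, mem_filter, mem_univ, true_and] at hx
    obtain ⟨j, hjm, rfl⟩ := hx
    obtain ⟨hjq, -, hpq⟩ := H h j hjm
    refine le_trans hpq ?_
    rw [rev_eq_max' hn v q hq]
    have hmem : q j ∈ ((univ : Finset (Fin n)).filter
        (fun i => v i - q i = maxUtil hn v q)).image q :=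
      mem_image_of_mem q (mem_filter.2 ⟨mem_univ j, hjq⟩)
    exact Finset.le_max' _ _ hmem
  · rw [Rev, if_neg h]; exact rev_nonneg hn v q hq0

lemma rev_le_ceil {n : ℕ} (hn : 0 < n) (v p : Fin n → ℝ)
    (hv : ∀ i, ∃ z : ℤ, v i = z) (hp : ∀ i, 0 ≤ p i) :
    Rev hn v p ≤ Rev hn v (fun i => (⌈p i⌉ : ℝ)) := by
  have key : ∀ i, v i - (⌈p i⌉ : ℝ) = (⌊v i - p i⌋ : ℝ) := by
    intro i
    obtain ⟨z, hz⟩ := hv i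
    rw [hz]
    have : ⌊(z : ℝ) - p i⌋ = z - ⌈p i⌉ := by
      rw [sub_eq_add_neg, Int.floor_intCast_add, Int.floor_neg, ← sub_eq_add_neg]
    rw [this]; push_cast; ring
  apply rev_mono hn v p _ (fun i => show (0 : ℝ) ≤ (⌈p i⌉ : ℝ) by
    exact_mod_cast Int.ceil_nonneg (hp i))
  intro h j hj
  have hfloor : ∀ i, (⌊v i - p i⌋ : ℝ) ≤ (⌊v j - p j⌋ : ℝ) := by
    intro i
    exact_mod_cast Int.floor_le_floor (hj ▸ le_maxUtil hn v p i)
  have hmax : v j - (⌈p j⌉ : ℝ) = maxUtil hn v (fun i => (⌈p i⌉ : ℝ)) := by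
    apply le_antisymm (le_maxUtil hn v _ j)
    apply Finset.sup'_le
    intro i _
    rw [key i, key j]
    exact hfloor i
  refine ⟨hmax, ?_, Int.le_ceil _⟩
  rw [key j]
  have : (0 : ℤ) ≤ ⌊v j - p j⌋ := Int.floor_nonneg.2 (hj ▸ h)
  exact_mod_cast this

lemma rev_le_cap {n : ℕ} (hn : 0 < n) (v p : Fin n → ℝ) (B : ℝ) (hB0 : 0 ≤ B)
    (hvB : ∀ i, v i ≤ B) (hp : ∀ i, 0 ≤ p i) :
    Rev hn v p ≤ Rev hn v (fun i => min (p i) B) := by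
  apply rev_mono hn v p _ (fun i => le_min (hp i) hB0)
  intro h j hj
  have hpj : 0 ≤ v j - p j := hj ▸ h
  have hqj : min (p j) B = p j :=
    min_eq_left (le_trans (by linarith) (hvB j))
  have hmax : v j - min (p j) B = maxUtil hn v (fun i => min (p i) B) := by
    apply le_antisymm (le_maxUtil hn v _ j)
    apply Finset.sup'_le
    intro i _
    show v i - min (p i) B ≤ v j - min (p j) B
    rcases le_total (p i) B with hc | hc
    · rw [min_eq_left hc, hqj]
      exact hj ▸ le_maxUtil hn v p i
    · rw [min_eq_right hc, hqj]
      have := hvB i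
      linarith
  exact ⟨hmax, by rw [hqj]; linarith, by rw [hqj]⟩

lemma expRev_mono {n : ℕ} (hn : 0 < n) (supp : Fin n → Finset ℝ)
    (μ : Fin n → ℝ → ℝ) (hμ0 : ∀ i x, 0 ≤ μ i x) (p q : Fin n → ℝ)
    (h : ∀ v ∈ Fintype.piFinset supp, Rev hn v p ≤ Rev hn v q) :
    ExpRev hn supp μ p ≤ ExpRev hn supp μ q :=
  Finset.sum_le_sum fun v hv => mul_le_mul_of_nonneg_left (h v hv)
    (Finset.prod_nonneg fun i _ => hμ0 i _)

theorem integer_optimal_prices (n : ℕ) (hn : 0 < n)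
    (supp : Fin n → Finset ℝ) (hsupp : ∀ i, (supp i).Nonempty)
    (hint : ∀ i, ∀ x ∈ supp i, ∃ z : ℤ, (0 ≤ z ∧ x = z))
    (μ : Fin n → ℝ → ℝ) (hμ0 : ∀ i x, 0 ≤ μ i x)
    (hμrat : ∀ i x, ∃ r : ℚ, μ i x = r)
    (hμ1 : ∀ i, ∑ x ∈ supp i, μ i x = 1) :
    ∃ p : Fin n → ℝ, (∀ i, ∃ z : ℤ, p i = z) ∧ (∀ i, 0 ≤ p i) ∧
      ∀ p' : Fin n → ℝ, (∀ i, 0 ≤ p' i) →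
        ExpRev hn supp μ p' ≤ ExpRev hn supp μ p := by
  classical
  -- a uniform natural bound on all support values
  set N : ℕ := (univ : Finset (Fin n)).sup (fun i => (supp i).sup (fun x => ⌈x⌉.toNat)) with hN
  have hbound : ∀ i, ∀ x ∈ supp i, x ≤ (N : ℝ) := by
    intro i x hx
    obtain ⟨z, hz0, hzx⟩ := hint i x hx
    have h1 : ⌈x⌉.toNat ≤ N :=
      le_trans (Finset.le_sup (f := fun x => ⌈x⌉.toNat) hx)
        (Finset.le_sup (f := fun i => (supp i).sup (fun x => ⌈x⌉.toNat)) (mem_univ i))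
    have h2 : x ≤ (⌈x⌉.toNat : ℝ) := by
      rw [hzx]
      rw [show ⌈(z : ℝ)⌉ = z by exact_mod_cast Int.ceil_intCast z]
      exact_mod_cast Int.self_le_toNat z
    exact le_trans h2 (by exact_mod_cast h1)
  -- candidate finite set of integer price vectors
  set P : Finset (Fin n → ℝ) := Fintype.piFinset
    (fun _ : Fin n => (Finset.range (N + 1)).image (fun k : ℕ => (k : ℝ))) with hP
  have hPne : P.Nonempty := by
    refine ⟨fun _ => (0 : ℝ), ?_⟩
    rw [hP, Fintype.mem_piFinset]
    intro i
    exact mem_image.2 ⟨0, Finset.mem_range.2 (Nat.succ_pos N), by norm_num⟩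
  obtain ⟨q, hqP, hqmax⟩ := Finset.exists_max_image P (ExpRev hn supp μ) hPne
  have hqmem : ∀ i, ∃ k : ℕ, q i = (k : ℝ) := by
    intro i
    rw [hP, Fintype.mem_piFinset] at hqP
    obtain ⟨k, -, hk⟩ := mem_image.1 (hqP i)
    exact ⟨k, hk.symm⟩
  refine ⟨q, ?_, ?_, ?_⟩
  · intro i; obtain ⟨k, hk⟩ := hqmem i; exact ⟨k, by exact_mod_cast hk⟩
  · intro i; obtain ⟨k, hk⟩ := hqmem i; rw [hk]; positivity
  · intro p' hp'
    have hvint : ∀ v ∈ Fintype.piFinset supp, ∀ i, ∃ z : ℤ, v i = z := by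
      intro v hv i
      obtain ⟨z, -, hz⟩ := hint i (v i) ((Fintype.mem_piFinset.1 hv) i)
      exact ⟨z, hz⟩
    set p1 : Fin n → ℝ := fun i => (⌈p' i⌉ : ℝ) with hp1
    set p2 : Fin n → ℝ := fun i => min (p1 i) (N : ℝ) with hp2
    have hp10 : ∀ i, 0 ≤ p1 i := fun i => by
      show (0 : ℝ) ≤ (⌈p' i⌉ : ℝ)
      exact_mod_cast Int.ceil_nonneg (hp' i)
    have step1 : ExpRev hn supp μ p' ≤ ExpRev hn supp μ p1 :=
      expRev_mono hn supp μ hμ0 _ _ fun v hv =>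
        rev_le_ceil hn v p' (hvint v hv) hp'
    have step2 : ExpRev hn supp μ p1 ≤ ExpRev hn supp μ p2 :=
      expRev_mono hn supp μ hμ0 _ _ fun v hv =>
        rev_le_cap hn v p1 (N : ℝ) (by positivity)
          (fun i => hbound i (v i) ((Fintype.mem_piFinset.1 hv) i)) hp10
    have hp2P : p2 ∈ P := by
      rw [hP, Fintype.mem_piFinset]
      intro i
      refine mem_image.2 ⟨min ⌈p' i⌉.toNat N, Finset.mem_range.2 ?_, ?_⟩
      · exact Nat.lt_succ_of_le (min_le_right _ _)
      · have hcz : ((⌈p' i⌉.toNat : ℕ) : ℝ) = (⌈p' i⌉ : ℝ) := by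
          exact_mod_cast Int.toNat_of_nonneg (Int.ceil_nonneg (hp' i))
        rw [hp2]
        push_cast
        rw [hcz]
    exact le_trans step1 (le_trans step2 (hqmax p2 hp2P))
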